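/- Under the setting of the derivative identity for V along solutions of ẋ(t) = ∑_{j=1}^{M} Γ_j f_j(x(t)) + B u(t): if in addition the block matrix Q is negative semidefinite, then along every solution, for all t, d/dt V(x(t)) ≤ − ∑_{j=1}^{M} f_j(x(t))^⊤ Ξ^j f_j(x(t)) − 2 ∑_{j=1}^{M} x(t)^⊤ Υ_{0,j} f_j(x(t)) − 2 ∑_{s=1}^{M−1} ∑_{z=s+1}^{M} f_s(x(t))^⊤ Υ_{s,z} f_z(x(t)) + (B u(t))^⊤ Φ (B u(t)). -/

import Mathlib

/-!
Along a solution, `d/dt V(x) = 2 xᵀ P ẋ + 2 ∑ⱼ fⱼ(x)ᵀ Λʲ ẋ`, the integral terms being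
differentiated by the fundamental theorem of calculus (`Λʲ` is diagonal). Substituting
`ẋ = ∑ⱼ Γⱼ fⱼ(x) + Bu` and expanding the quadratic form of `Q` at the stacked vector
`w = (x, f₁(x), …, f_M(x), Bu)` shows that `d/dt V(x)` minus the claimed bound is exactly
`wᵀ Q w`, which is nonpositive.
-/

open Matrix Finset

section Calculus

variable {𝕜 ι : Type*} [NontriviallyNormedField 𝕜] [Fintype ι]
  {f g : 𝕜 → ι → 𝕜} {f' g' : ι → 𝕜} {t : 𝕜}

theorem HasDerivAt.dotProduct (hf : HasDerivAt f f' t) (hg : HasDerivAt g g' t) :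
    HasDerivAt (fun s => f s ⬝ᵥ g s) (f' ⬝ᵥ g t + f t ⬝ᵥ g') t := by
  simp only [_root_.dotProduct, ← sum_add_distrib]
  exact HasDerivAt.fun_sum fun i _ => (hasDerivAt_pi.mp hf i).mul (hasDerivAt_pi.mp hg i)

theorem HasDerivAt.mulVec {m : Type*} [Fintype m] (A : Matrix m ι 𝕜) (hf : HasDerivAt f f' t) :
    HasDerivAt (fun s => A *ᵥ f s) (A *ᵥ f') t :=
  hasDerivAt_pi.mpr fun i => by
    simpa [Matrix.mulVec] using (hasDerivAt_const t (A i)).dotProduct hf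

end Calculus

theorem Matrix.IsDiag.dotProduct_mulVec {ι R : Type*} [Fintype ι] [DecidableEq ι] [CommSemiring R]
    {A : Matrix ι ι R} (hA : A.IsDiag) (w v : ι → R) :
    w ⬝ᵥ A *ᵥ v = ∑ i, A i i * (w i * v i) := by
  rw [← hA.diagonal_diag]
  simp only [dotProduct, mulVec_diagonal, diagonal_apply_eq]
  exact sum_congr rfl fun i _ => by ring

theorem Matrix.IsSymm.mulVec_dotProduct {ι R : Type*} [Fintype ι] [CommSemiring R]
    {A : Matrix ι ι R} (hA : A.IsSymm) (v w : ι → R) :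
    A *ᵥ v ⬝ᵥ w = v ⬝ᵥ A *ᵥ w := by
  rw [dotProduct_comm, ← dotProduct_transpose_mulVec, hA.eq]

theorem Finset.sum_sum_eq_sum_diag_add_two_mul_sum_lt {ι R : Type*} [LinearOrder ι]
    [CommSemiring R] (s : Finset ι) (G : ι → ι → R) (hG : ∀ a ∈ s, ∀ b ∈ s, G b a = G a b) :
    ∑ a ∈ s, ∑ b ∈ s, G a b = ∑ a ∈ s, G a a + 2 * ∑ a ∈ s, ∑ b ∈ s with a < b, G a b := by
  have trichotomy : ∀ a b, G a b = (if a < b then G a b else 0) + (if a = b then G a b else 0)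
      + (if b < a then G a b else 0) := by
    intro a b
    rcases lt_trichotomy a b with h | rfl | h
    · simp [h, h.ne, h.not_gt]
    · simp
    · simp [h, h.ne', h.not_gt]
  have lower : ∑ a ∈ s, ∑ b ∈ s, (if b < a then G a b else 0)
      = ∑ a ∈ s, ∑ b ∈ s, (if a < b then G a b else 0) := by
    rw [sum_comm]
    exact sum_congr rfl fun a ha => sum_congr rfl fun b hb => by rw [hG a ha b hb]
  have diag : ∑ a ∈ s, (if a ∈ s then G a a else 0) = ∑ a ∈ s, G a a :=
    sum_congr rfl fun a ha => if_pos ha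
  rw [sum_congr rfl fun a _ => sum_congr rfl fun b _ => trichotomy a b]
  simp only [sum_add_distrib, sum_ite_eq]
  rw [lower, diag]
  simp only [sum_filter]
  ring

theorem Finset.sum_Icc_sum_Icc_eq_of_symm {R : Type*} [CommSemiring R] (M : ℕ) (G : ℕ → ℕ → R)
    (hG : ∀ a ∈ Icc 1 M, ∀ b ∈ Icc 1 M, G b a = G a b) :
    ∑ a ∈ Icc 1 M, ∑ b ∈ Icc 1 M, G a b
      = ∑ a ∈ Icc 1 M, G a a + 2 * ∑ a ∈ Icc 1 (M - 1), ∑ b ∈ Icc (a + 1) M, G a b := by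
  have upper : ∑ a ∈ Icc 1 M, ∑ b ∈ Icc 1 M with a < b, G a b
      = ∑ a ∈ Icc 1 M, ∑ b ∈ Icc (a + 1) M, G a b := sum_congr rfl fun a ha => by
    congr 1; ext b; simp only [mem_filter, mem_Icc] at ha ⊢; omega
  have last : ∀ a ∈ Icc 1 M, a ∉ Icc 1 (M - 1) → ∑ b ∈ Icc (a + 1) M, G a b = 0 :=
    fun a ha ha' => by
      simp only [mem_Icc] at ha ha'
      rw [Icc_eq_empty (by omega), sum_empty]
  rw [sum_sum_eq_sum_diag_add_two_mul_sum_lt _ G hG, upper,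
    sum_subset (Icc_subset_Icc_right (Nat.sub_le M 1)) last]

theorem Finset.sum_range_add_two_eq {R : Type*} [AddCommMonoid R] (M : ℕ) (f : ℕ → R) :
    ∑ a ∈ range (M + 2), f a = f 0 + ∑ j ∈ Icc 1 M, f j + f (M + 1) := by
  rw [sum_range_succ, sum_range_succ', ← Ico_add_one_right_eq_Icc, sum_Ico_eq_sum_range]
  simp only [add_tsub_cancel_right, add_comm 1]
  abel

theorem Finset.sum_range_add_two_sum_range_add_two_of_symm {R : Type*} [CommSemiring R] (M : ℕ)
    (q : ℕ → ℕ → R) (hq : ∀ a b, a ≤ M + 1 → b ≤ M + 1 → q b a = q a b) :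
    ∑ a ∈ range (M + 2), ∑ b ∈ range (M + 2), q a b
      = q 0 0 + 2 * q 0 (M + 1) + q (M + 1) (M + 1)
        + 2 * ∑ j ∈ Icc 1 M, (q 0 j + q j (M + 1)) + ∑ s ∈ Icc 1 M, ∑ z ∈ Icc 1 M, q s z := by
  have col_zero : ∑ j ∈ Icc 1 M, q j 0 = ∑ j ∈ Icc 1 M, q 0 j :=
    sum_congr rfl fun j hj => hq 0 j (by omega) (by simp at hj; omega)
  have row_last : ∑ j ∈ Icc 1 M, q (M + 1) j = ∑ j ∈ Icc 1 M, q j (M + 1) :=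
    sum_congr rfl fun j hj => hq j (M + 1) (by simp at hj; omega) le_rfl
  simp only [sum_range_add_two_eq, sum_add_distrib, col_zero, row_last,
    hq 0 (M + 1) (by omega) le_rfl]
  ring

theorem Matrix.dotProduct_mulVec_eq_sum_range_blocks {κ R : Type*} [Fintype κ] [CommSemiring R]
    {N : ℕ} (Q : Matrix (Fin N × κ) (Fin N × κ) R) (Qb : ℕ → ℕ → Matrix κ κ R)
    (hQ : ∀ (a b : Fin N) (i k : κ), Q (a, i) (b, k) = Qb a b i k) (W : ℕ → κ → R) :
    (fun p : Fin N × κ => W p.1 p.2) ⬝ᵥ Q *ᵥ (fun p => W p.1 p.2)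
      = ∑ a ∈ range N, ∑ b ∈ range N, W a ⬝ᵥ Qb a b *ᵥ W b := by
  simp only [← Fin.sum_univ_eq_sum_range]
  simp only [dotProduct, mulVec, Fintype.sum_prod_type, hQ, mul_sum]
  refine sum_congr rfl fun a _ => ?_
  exact sum_comm

def blockStack {α : Type*} (M : ℕ) (X Bu : α) (F : ℕ → α) (a : ℕ) : α :=
  if a = 0 then X else if a = M + 1 then Bu else F a

theorem blockStack_zero {α : Type*} (M : ℕ) (X Bu : α) (F : ℕ → α) : blockStack M X Bu F 0 = X :=
  if_pos rfl

theorem blockStack_last {α : Type*} (M : ℕ) (X Bu : α) (F : ℕ → α) :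
    blockStack M X Bu F (M + 1) = Bu := by
  simp [blockStack]

theorem blockStack_of_mem_Icc {α : Type*} {M j : ℕ} {X Bu : α} {F : ℕ → α} (hj : j ∈ Icc 1 M) :
    blockStack M X Bu F j = F j := by
  obtain ⟨hj1, hjM⟩ := mem_Icc.mp hj
  simp only [blockStack, if_neg (show j ≠ 0 by omega), if_neg (show j ≠ M + 1 by omega)]

section BlockMatrix

variable {κ R : Type*} [Fintype κ] [CommRing R] {M : ℕ} {Γ Λ Ξ : ℕ → Matrix κ κ R}
  {Υ : ℕ → ℕ → Matrix κ κ R} {P Φ : Matrix κ κ R} {Qb : ℕ → ℕ → Matrix κ κ R}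

/-- `Qb a b` is the block `Q_{a+1,b+1}` of the paper. -/
structure IsLyapunovBlockMatrix (M : ℕ) (Γ Λ Ξ : ℕ → Matrix κ κ R) (Υ : ℕ → ℕ → Matrix κ κ R)
    (P Φ : Matrix κ κ R) (Qb : ℕ → ℕ → Matrix κ κ R) : Prop where
  zero_zero : Qb 0 0 = 0
  zero_mid : ∀ j, 1 ≤ j → j ≤ M → Qb 0 j = P * Γ j + Υ 0 j
  zero_last : Qb 0 (M + 1) = P
  mid_diag : ∀ j, 1 ≤ j → j ≤ M → Qb j j = (Γ j)ᵀ * Λ j + Λ j * Γ j + Ξ j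
  mid_offDiag : ∀ s z, 1 ≤ s → s < z → z ≤ M → Qb s z = (Γ s)ᵀ * Λ z + Λ s * Γ z + Υ s z
  mid_last : ∀ j, 1 ≤ j → j ≤ M → Qb j (M + 1) = Λ j
  last_last : Qb (M + 1) (M + 1) = -Φ
  symm : ∀ a b, a ≤ M + 1 → b ≤ M + 1 → Qb b a = (Qb a b)ᵀ

namespace IsLyapunovBlockMatrix

theorem sum_mid_blocks (hQ : IsLyapunovBlockMatrix M Γ Λ Ξ Υ P Φ Qb)
    (hΛ : ∀ j ∈ Icc 1 M, (Λ j).IsSymm) (F : ℕ → κ → R) :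
    ∑ s ∈ Icc 1 M, ∑ z ∈ Icc 1 M, F s ⬝ᵥ Qb s z *ᵥ F z
      = 2 * ∑ s ∈ Icc 1 M, ∑ z ∈ Icc 1 M, F s ⬝ᵥ Λ s *ᵥ Γ z *ᵥ F z
        + ∑ j ∈ Icc 1 M, F j ⬝ᵥ Ξ j *ᵥ F j
        + 2 * ∑ s ∈ Icc 1 (M - 1), ∑ z ∈ Icc (s + 1) M, F s ⬝ᵥ Υ s z *ᵥ F z := by
  set K : ℕ → ℕ → R := fun s z => F s ⬝ᵥ Λ s *ᵥ Γ z *ᵥ F z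
  have diag : ∀ j ∈ Icc 1 M, F j ⬝ᵥ Qb j j *ᵥ F j = 2 * K j j + F j ⬝ᵥ Ξ j *ᵥ F j := by
    intro j hj
    obtain ⟨hj1, hjM⟩ := mem_Icc.mp hj
    rw [hQ.mid_diag j hj1 hjM, add_mulVec, add_mulVec, dotProduct_add, dotProduct_add,
      ← mulVec_mulVec, ← mulVec_mulVec, dotProduct_transpose_mulVec, (hΛ j hj).mulVec_dotProduct]
    ring
  have offDiag : ∀ s ∈ Icc 1 (M - 1), ∀ z ∈ Icc (s + 1) M,
      F s ⬝ᵥ Qb s z *ᵥ F z = (K z s + K s z) + F s ⬝ᵥ Υ s z *ᵥ F z := by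
    intro s hs z hz
    obtain ⟨hs1, -⟩ := mem_Icc.mp hs
    obtain ⟨hsz, hzM⟩ := mem_Icc.mp hz
    rw [hQ.mid_offDiag s z hs1 hsz hzM, add_mulVec, add_mulVec, dotProduct_add, dotProduct_add,
      ← mulVec_mulVec, ← mulVec_mulVec, dotProduct_transpose_mulVec,
      (hΛ z (mem_Icc.mpr ⟨by omega, hzM⟩)).mulVec_dotProduct]
  have symm : ∀ s ∈ Icc 1 M, ∀ z ∈ Icc 1 M, F z ⬝ᵥ Qb z s *ᵥ F s = F s ⬝ᵥ Qb s z *ᵥ F z := by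
    intro s hs z hz
    rw [hQ.symm s z (by simp at hs; omega) (by simp at hz; omega), dotProduct_transpose_mulVec]
  have cross : 2 * ∑ s ∈ Icc 1 M, ∑ z ∈ Icc 1 M, K s z = ∑ j ∈ Icc 1 M, 2 * K j j
      + 2 * ∑ s ∈ Icc 1 (M - 1), ∑ z ∈ Icc (s + 1) M, (K z s + K s z) := by
    have swap : ∑ s ∈ Icc 1 M, ∑ z ∈ Icc 1 M, K z s = ∑ s ∈ Icc 1 M, ∑ z ∈ Icc 1 M, K s z :=
      sum_comm
    have h := sum_Icc_sum_Icc_eq_of_symm M (fun s z => K z s + K s z) fun _ _ _ _ => add_comm _ _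
    simp only [sum_add_distrib, swap] at h ⊢
    rw [← mul_sum]
    linear_combination h
  rw [sum_Icc_sum_Icc_eq_of_symm M _ symm, sum_congr rfl diag,
    sum_congr rfl fun s hs => sum_congr rfl (offDiag s hs), cross]
  simp only [sum_add_distrib]
  ring

theorem sum_blockStack_blocks (hQ : IsLyapunovBlockMatrix M Γ Λ Ξ Υ P Φ Qb)
    (hΛ : ∀ j ∈ Icc 1 M, (Λ j).IsSymm) (X Bu : κ → R) (F : ℕ → κ → R) :
    ∑ a ∈ range (M + 2), ∑ b ∈ range (M + 2),
        blockStack M X Bu F a ⬝ᵥ Qb a b *ᵥ blockStack M X Bu F b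
      = 2 * (X ⬝ᵥ P *ᵥ (∑ j ∈ Icc 1 M, Γ j *ᵥ F j + Bu))
        + 2 * ∑ j ∈ Icc 1 M, F j ⬝ᵥ Λ j *ᵥ (∑ z ∈ Icc 1 M, Γ z *ᵥ F z + Bu)
        + ∑ j ∈ Icc 1 M, F j ⬝ᵥ Ξ j *ᵥ F j
        + 2 * ∑ j ∈ Icc 1 M, X ⬝ᵥ Υ 0 j *ᵥ F j
        + 2 * ∑ s ∈ Icc 1 (M - 1), ∑ z ∈ Icc (s + 1) M, F s ⬝ᵥ Υ s z *ᵥ F z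
        - Bu ⬝ᵥ Φ *ᵥ Bu := by
  set W := blockStack M X Bu F
  have symm : ∀ a b, a ≤ M + 1 → b ≤ M + 1 → W b ⬝ᵥ Qb b a *ᵥ W a = W a ⬝ᵥ Qb a b *ᵥ W b :=
    fun a b ha hb => by rw [hQ.symm a b ha hb, dotProduct_transpose_mulVec]
  have border : ∀ j ∈ Icc 1 M, W 0 ⬝ᵥ Qb 0 j *ᵥ W j + W j ⬝ᵥ Qb j (M + 1) *ᵥ W (M + 1)
      = X ⬝ᵥ P *ᵥ Γ j *ᵥ F j + X ⬝ᵥ Υ 0 j *ᵥ F j + F j ⬝ᵥ Λ j *ᵥ Bu := by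
    intro j hj
    obtain ⟨hj1, hjM⟩ := mem_Icc.mp hj
    simp only [W, blockStack_zero, blockStack_last, blockStack_of_mem_Icc hj,
      hQ.zero_mid j hj1 hjM, hQ.mid_last j hj1 hjM, add_mulVec, dotProduct_add, ← mulVec_mulVec]
  have mid : ∑ s ∈ Icc 1 M, ∑ z ∈ Icc 1 M, W s ⬝ᵥ Qb s z *ᵥ W z
      = ∑ s ∈ Icc 1 M, ∑ z ∈ Icc 1 M, F s ⬝ᵥ Qb s z *ᵥ F z :=
    sum_congr rfl fun s hs => sum_congr rfl fun z hz => by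
      simp only [W, blockStack_of_mem_Icc hs, blockStack_of_mem_Icc hz]
  rw [sum_range_add_two_sum_range_add_two_of_symm M _ symm, sum_congr rfl border, mid,
    hQ.sum_mid_blocks hΛ F]
  simp only [W, blockStack_zero, blockStack_last, hQ.zero_zero, hQ.zero_last, hQ.last_last,
    zero_mulVec, dotProduct_zero, neg_mulVec, dotProduct_neg, mulVec_add, mulVec_sum,
    dotProduct_add, dotProduct_sum, sum_add_distrib]
  ring

end IsLyapunovBlockMatrix
end BlockMatrix

noncomputable def lyapunovFun {n : ℕ} (M : ℕ) (P : Matrix (Fin n) (Fin n) ℝ)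
    (Λ : ℕ → Matrix (Fin n) (Fin n) ℝ) (g : ℕ → Fin n → ℝ → ℝ) (y : Fin n → ℝ) : ℝ :=
  y ⬝ᵥ P *ᵥ y + 2 * ∑ j ∈ Icc 1 M, ∑ i, Λ j i i * ∫ ν in (0 : ℝ)..(y i), g j i ν

theorem hasDerivAt_lyapunovFun {n M : ℕ} {P : Matrix (Fin n) (Fin n) ℝ}
    {Λ : ℕ → Matrix (Fin n) (Fin n) ℝ} {g : ℕ → Fin n → ℝ → ℝ} {x : ℝ → Fin n → ℝ}
    {v : Fin n → ℝ} {t : ℝ} (hP : P.IsSymm) (hΛ : ∀ j ∈ Icc 1 M, (Λ j).IsDiag)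
    (hg : ∀ j ∈ Icc 1 M, ∀ i, Continuous (g j i)) (hx : HasDerivAt x v t) :
    HasDerivAt (fun s => lyapunovFun M P Λ g (x s))
      (2 * (x t ⬝ᵥ P *ᵥ v) + 2 * ∑ j ∈ Icc 1 M, (fun i => g j i (x t i)) ⬝ᵥ Λ j *ᵥ v) t := by
  have integral : ∀ j ∈ Icc 1 M,
      HasDerivAt (fun s => ∑ i, Λ j i i * ∫ ν in (0 : ℝ)..(x s i), g j i ν)
        ((fun i => g j i (x t i)) ⬝ᵥ Λ j *ᵥ v) t := by
    intro j hj
    rw [(hΛ j hj).dotProduct_mulVec]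
    refine HasDerivAt.fun_sum fun i _ => ?_
    exact (((hg j hj i).integral_hasStrictDerivAt 0 (x t i)).hasDerivAt.comp t
      (hasDerivAt_pi.mp hx i)).const_mul (Λ j i i)
  refine ((hx.dotProduct (hx.mulVec P)).add
    ((HasDerivAt.fun_sum integral).const_mul 2)).congr_deriv ?_
  rw [← dotProduct_transpose_mulVec P (x t) v, hP.eq]
  ring

theorem lyapunov_derivative_bound_general
    (n m M : ℕ)
    (Γ : ℕ → Matrix (Fin n) (Fin n) ℝ) (B : Matrix (Fin n) (Fin m) ℝ)
    (g : ℕ → Fin n → ℝ → ℝ)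
    (hcont : ∀ j, 1 ≤ j → j ≤ M → ∀ i, Continuous (g j i))
    (P : Matrix (Fin n) (Fin n) ℝ) (hPsymm : P.IsSymm)
    (Λ Ξ : ℕ → Matrix (Fin n) (Fin n) ℝ) (Υ : ℕ → ℕ → Matrix (Fin n) (Fin n) ℝ)
    (hΛ : ∀ j, 1 ≤ j → j ≤ M → (Λ j).IsDiag)
    (Φ : Matrix (Fin n) (Fin n) ℝ)
    -- the Lyapunov function V
    (V : (Fin n → ℝ) → ℝ)
    (hV : ∀ y : Fin n → ℝ,
      V y = y ⬝ᵥ P.mulVec y +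
        2 * ∑ j ∈ Finset.Icc 1 M, ∑ i, Λ j i i * ∫ ν in (0:ℝ)..(y i), g j i ν)
    -- the block matrix Q
    (Qb : ℕ → ℕ → Matrix (Fin n) (Fin n) ℝ)
    (Q : Matrix (Fin (M + 2) × Fin n) (Fin (M + 2) × Fin n) ℝ)
    (hQ : ∀ (a b : Fin (M + 2)) (i k : Fin n), Q (a, i) (b, k) = Qb a.val b.val i k)
    (hQb00 : Qb 0 0 = 0)
    (hQb0j : ∀ j, 1 ≤ j → j ≤ M → Qb 0 j = P * Γ j + Υ 0 j)
    (hQb0last : Qb 0 (M + 1) = P)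
    (hQbjj : ∀ j, 1 ≤ j → j ≤ M → Qb j j = (Γ j)ᵀ * Λ j + Λ j * Γ j + Ξ j)
    (hQbsz : ∀ s z, 1 ≤ s → s < z → z ≤ M → Qb s z = (Γ s)ᵀ * Λ z + Λ s * Γ z + Υ s z)
    (hQbjlast : ∀ j, 1 ≤ j → j ≤ M → Qb j (M + 1) = Λ j)
    (hQblast : Qb (M + 1) (M + 1) = -Φ)
    (hQbsym : ∀ a b, a ≤ M + 1 → b ≤ M + 1 → Qb b a = (Qb a b)ᵀ)
    -- Q is negative semidefinite
    (hQns : (-Q).PosSemidef)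
    -- a solution on [0, T) with continuous input
    (T : ℝ) (u : ℝ → Fin m → ℝ)
    (x : ℝ → Fin n → ℝ)
    (hx : ∀ t ∈ Set.Ico 0 T, HasDerivAt x
      (∑ j ∈ Finset.Icc 1 M, (Γ j).mulVec (fun i => g j i (x t i)) + B.mulVec (u t)) t) :
    ∀ t ∈ Set.Ico 0 T, ∀ d : ℝ, HasDerivAt (fun s => V (x s)) d t →
      d ≤ - ∑ j ∈ Finset.Icc 1 M,
            (fun i => g j i (x t i)) ⬝ᵥ (Ξ j).mulVec (fun i => g j i (x t i))
        - 2 * ∑ j ∈ Finset.Icc 1 M, x t ⬝ᵥ (Υ 0 j).mulVec (fun i => g j i (x t i))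
        - 2 * ∑ s ∈ Finset.Icc 1 (M - 1), ∑ z ∈ Finset.Icc (s + 1) M,
            (fun i => g s i (x t i)) ⬝ᵥ (Υ s z).mulVec (fun i => g z i (x t i))
        + B.mulVec (u t) ⬝ᵥ Φ.mulVec (B.mulVec (u t)) := by
  intro t ht d hd
  set w : ℕ → Fin n → ℝ := blockStack M (x t) (B *ᵥ u t) fun j i => g j i (x t i)
  have hΛ' : ∀ j ∈ Icc 1 M, (Λ j).IsDiag := fun j hj => hΛ j (mem_Icc.mp hj).1 (mem_Icc.mp hj).2
  have hQb : IsLyapunovBlockMatrix M Γ Λ Ξ Υ P Φ Qb :=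
    ⟨hQb00, hQb0j, hQb0last, hQbjj, hQbsz, hQbjlast, hQblast, hQbsym⟩
  have hderiv := (funext hV : V = lyapunovFun M P Λ g) ▸ hasDerivAt_lyapunovFun hPsymm hΛ'
    (fun j hj => hcont j (mem_Icc.mp hj).1 (mem_Icc.mp hj).2) (hx t ht)
  have hform := (dotProduct_mulVec_eq_sum_range_blocks Q Qb hQ w).trans
    (hQb.sum_blockStack_blocks (fun j hj => (hΛ' j hj).isSymm) (x t) (B *ᵥ u t) _)
  have hneg := hQns.dotProduct_mulVec_nonneg fun p => w p.1 p.2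
  rw [star_trivial, neg_mulVec, dotProduct_neg, hform] at hneg
  rw [hd.unique hderiv]
  linarith

/-- **Derivative bound for the Lyapunov function along solutions** of
`ẋ = ∑_{j=1}^M Γ_j f_j(x) + B u` when the block matrix `Q` is negative semidefinite:
`d/dt V(x(t)) ≤ − ∑_j f_jᵀ Ξʲ f_j − 2 ∑_j xᵀ Υ₀ⱼ f_j − 2 ∑_{s<z} f_sᵀ Υ_{s,z} f_z
  + (Bu)ᵀ Φ (Bu)`. -/
theorem lyapunov_derivative_bound
    (n m M : ℕ) (hM : 1 ≤ M)
    (Γ : ℕ → Matrix (Fin n) (Fin n) ℝ) (B : Matrix (Fin n) (Fin m) ℝ)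
    (g : ℕ → Fin n → ℝ → ℝ)
    (hcont : ∀ j, 1 ≤ j → j ≤ M → ∀ i, Continuous (g j i))
    (P : Matrix (Fin n) (Fin n) ℝ) (hPsymm : P.IsSymm)
    (Λ Ξ : ℕ → Matrix (Fin n) (Fin n) ℝ) (Υ : ℕ → ℕ → Matrix (Fin n) (Fin n) ℝ)
    (hΛ : ∀ j, 1 ≤ j → j ≤ M → (Λ j).IsDiag)
    (hΞ : ∀ j, 1 ≤ j → j ≤ M → (Ξ j).IsDiag)
    (hΥ : ∀ s z, s < z → z ≤ M → (Υ s z).IsDiag)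
    (Φ : Matrix (Fin n) (Fin n) ℝ) (hΦsymm : Φ.IsSymm)
    -- the Lyapunov function V
    (V : (Fin n → ℝ) → ℝ)
    (hV : ∀ y : Fin n → ℝ,
      V y = y ⬝ᵥ P.mulVec y +
        2 * ∑ j ∈ Finset.Icc 1 M, ∑ i, Λ j i i * ∫ ν in (0:ℝ)..(y i), g j i ν)
    -- the block matrix Q
    (Qb : ℕ → ℕ → Matrix (Fin n) (Fin n) ℝ)
    (Q : Matrix (Fin (M + 2) × Fin n) (Fin (M + 2) × Fin n) ℝ)
    (hQ : ∀ (a b : Fin (M + 2)) (i k : Fin n), Q (a, i) (b, k) = Qb a.val b.val i k)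
    (hQb00 : Qb 0 0 = 0)
    (hQb0j : ∀ j, 1 ≤ j → j ≤ M → Qb 0 j = P * Γ j + Υ 0 j)
    (hQb0last : Qb 0 (M + 1) = P)
    (hQbjj : ∀ j, 1 ≤ j → j ≤ M → Qb j j = (Γ j)ᵀ * Λ j + Λ j * Γ j + Ξ j)
    (hQbsz : ∀ s z, 1 ≤ s → s < z → z ≤ M → Qb s z = (Γ s)ᵀ * Λ z + Λ s * Γ z + Υ s z)
    (hQbjlast : ∀ j, 1 ≤ j → j ≤ M → Qb j (M + 1) = Λ j)
    (hQblast : Qb (M + 1) (M + 1) = -Φ)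
    (hQbsym : ∀ a b, a ≤ M + 1 → b ≤ M + 1 → Qb b a = (Qb a b)ᵀ)
    -- Q is negative semidefinite
    (hQns : (-Q).PosSemidef)
    -- a solution on [0, T) with continuous input
    (T : ℝ) (u : ℝ → Fin m → ℝ) (hu : Continuous u)
    (x : ℝ → Fin n → ℝ)
    (hx : ∀ t ∈ Set.Ico 0 T, HasDerivAt x
      (∑ j ∈ Finset.Icc 1 M, (Γ j).mulVec (fun i => g j i (x t i)) + B.mulVec (u t)) t) :
    ∀ t ∈ Set.Ico 0 T, ∀ d : ℝ, HasDerivAt (fun s => V (x s)) d t →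
      d ≤ - ∑ j ∈ Finset.Icc 1 M,
            (fun i => g j i (x t i)) ⬝ᵥ (Ξ j).mulVec (fun i => g j i (x t i))
        - 2 * ∑ j ∈ Finset.Icc 1 M, x t ⬝ᵥ (Υ 0 j).mulVec (fun i => g j i (x t i))
        - 2 * ∑ s ∈ Finset.Icc 1 (M - 1), ∑ z ∈ Finset.Icc (s + 1) M,
            (fun i => g s i (x t i)) ⬝ᵥ (Υ s z).mulVec (fun i => g z i (x t i))
        + B.mulVec (u t) ⬝ᵥ Φ.mulVec (B.mulVec (u t)) :=
  lyapunov_derivative_bound_general n m M Γ B g hcont P hPsymm Λ Ξ Υ hΛ Φ V hV Qb Q hQ hQb00 hQb0j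
    hQb0last hQbjj hQbsz hQbjlast hQblast hQbsym hQns T u x hx
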